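/- arXiv:2208.06549 — 3 statements merged into one kernel-verified Lean document; each statement's English description precedes it below -/
import Mathlib

section
/- Let X = μ + γZ + √Z·A·N_n be an n-dimensional normal mean-variance mixture with Σ = AAᵀ, and let U(w) = -e^{-aw} with a > 0. For a portfolio x ∈ ℝⁿ with wealth W(x) = W₀(1+r_f) + W₀ xᵀ(X - 1·r_f), we have E[U(W(x))] = -e^{-aW₀(1+r_f)} e^{-aW₀ xᵀ(μ - 1·r_f)} L_Z(aW₀ xᵀγ - (a²W₀²/2) xᵀΣx), where L_Z is the Laplace transform of Z, provided the argument of L_Z is in the domain of finiteness. -/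
open MeasureTheory ProbabilityTheory Real Matrix

/-!
Given `Z = z`, the exponent `-a W` is affine in `N_n`, with linear part `-a W₀ √z (xᵀA) N_n`, so the
standard Gaussian moment generating function `E[exp (cᵀ N_n)] = exp (|c|² / 2)` integrates `N_n` out
and leaves `exp (-s z)` with `s = a W₀ xᵀγ - (a² W₀² / 2) xᵀΣx`. Independence makes the joint law of
`(Z, N_n)` a product measure, so this is Tonelli's theorem; computing with lower Lebesgue integrals
of the positive integrands avoids integrability questions, the Bochner integrals being their real
parts.
-/

section GaussianMixture

variable {ι : Type*} [Fintype ι]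

lemma integrable_exp_dotProduct_pi_gaussianReal (c : ι → ℝ) :
    Integrable (fun y ↦ exp (c ⬝ᵥ y)) (Measure.pi fun _ : ι ↦ gaussianReal 0 1) := by
  simp only [dotProduct, exp_sum]
  exact Integrable.fintype_prod fun i ↦ integrable_exp_mul_gaussianReal (c i)

lemma integral_exp_dotProduct_pi_gaussianReal (c : ι → ℝ) :
    ∫ y, exp (c ⬝ᵥ y) ∂(Measure.pi fun _ : ι ↦ gaussianReal 0 1) = exp (c ⬝ᵥ c / 2) := by
  simp only [dotProduct, exp_sum, Finset.sum_div]
  rw [integral_fintype_prod_eq_prod (fun i y ↦ exp (c i * y))]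
  refine Finset.prod_congr rfl fun i _ ↦ ?_
  have hmgf := congrFun (mgf_id_gaussianReal (μ := 0) (v := 1)) (c i)
  simp only [mgf, id] at hmgf
  rw [hmgf]
  congr 1
  push_cast
  ring

lemma lintegral_exp_dotProduct_pi_gaussianReal (c : ι → ℝ) :
    ∫⁻ y, ENNReal.ofReal (exp (c ⬝ᵥ y)) ∂(Measure.pi fun _ : ι ↦ gaussianReal 0 1)
      = ENNReal.ofReal (exp (c ⬝ᵥ c / 2)) := by
  rw [← ofReal_integral_eq_lintegral_ofReal (integrable_exp_dotProduct_pi_gaussianReal c)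
    (ae_of_all _ fun _ ↦ (exp_pos _).le), integral_exp_dotProduct_pi_gaussianReal]

variable {Ω E : Type*} {mΩ : MeasurableSpace Ω} [MeasurableSpace E] {P : Measure Ω}
  [IsFiniteMeasure P] {Z : Ω → E} {N : Ω → ι → ℝ}

lemma lintegral_exp_add_dotProduct_of_indepFun (hZ : Measurable Z) (hN : Measurable N)
    (hlaw : P.map N = Measure.pi fun _ : ι ↦ gaussianReal 0 1) (hindep : IndepFun Z N P)
    {f : E → ℝ} {c : E → ι → ℝ} (hf : Measurable f) (hc : Measurable c) :
    ∫⁻ ω, ENNReal.ofReal (exp (f (Z ω) + c (Z ω) ⬝ᵥ N ω)) ∂P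
      = ∫⁻ ω, ENNReal.ofReal (exp (f (Z ω) + c (Z ω) ⬝ᵥ c (Z ω) / 2)) ∂P := by
  have hjoint : P.map (fun ω ↦ (Z ω, N ω))
      = (P.map Z).prod (Measure.pi fun _ : ι ↦ gaussianReal 0 1) := by
    rw [← hlaw]
    exact (indepFun_iff_map_prod_eq_prod_map_map hZ.aemeasurable hN.aemeasurable).mp hindep
  have hmeas : Measurable fun p : E × (ι → ℝ) ↦ ENNReal.ofReal (exp (f p.1 + c p.1 ⬝ᵥ p.2)) := by
    simp only [dotProduct]
    fun_prop
  calc ∫⁻ ω, ENNReal.ofReal (exp (f (Z ω) + c (Z ω) ⬝ᵥ N ω)) ∂P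
      = ∫⁻ z, ∫⁻ y, ENNReal.ofReal (exp (f z + c z ⬝ᵥ y))
          ∂(Measure.pi fun _ : ι ↦ gaussianReal 0 1) ∂(P.map Z) := by
        rw [← lintegral_prod _ hmeas.aemeasurable, ← hjoint,
          lintegral_map hmeas (hZ.prodMk hN)]
    _ = ∫⁻ z, ENNReal.ofReal (exp (f z + c z ⬝ᵥ c z / 2)) ∂(P.map Z) := by
        refine lintegral_congr fun z ↦ ?_
        simp only [exp_add, ENNReal.ofReal_mul (exp_pos _).le]
        rw [lintegral_const_mul _ (by simp only [dotProduct]; fun_prop),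
          lintegral_exp_dotProduct_pi_gaussianReal]
    _ = ∫⁻ ω, ENNReal.ofReal (exp (f (Z ω) + c (Z ω) ⬝ᵥ c (Z ω) / 2)) ∂P := by
        rw [lintegral_map (by simp only [dotProduct]; fun_prop) hZ]

lemma integral_exp_add_dotProduct_of_indepFun (hZ : Measurable Z) (hN : Measurable N)
    (hlaw : P.map N = Measure.pi fun _ : ι ↦ gaussianReal 0 1) (hindep : IndepFun Z N P)
    {f : E → ℝ} {c : E → ι → ℝ} (hf : Measurable f) (hc : Measurable c) :
    ∫ ω, exp (f (Z ω) + c (Z ω) ⬝ᵥ N ω) ∂P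
      = ∫ ω, exp (f (Z ω) + c (Z ω) ⬝ᵥ c (Z ω) / 2) ∂P := by
  rw [integral_eq_lintegral_of_nonneg_ae (ae_of_all _ fun _ ↦ (exp_pos _).le)
      (by simp only [dotProduct]; fun_prop),
    integral_eq_lintegral_of_nonneg_ae (ae_of_all _ fun _ ↦ (exp_pos _).le)
      (by simp only [dotProduct]; fun_prop),
    lintegral_exp_add_dotProduct_of_indepFun hZ hN hlaw hindep hf hc]

end GaussianMixture

theorem statement1_general
    {Ω : Type*} [MeasureSpace Ω] (P : Measure Ω) [IsProbabilityMeasure P]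
    (n : ℕ) (μ γ : Fin n → ℝ) (A : Matrix (Fin n) (Fin n) ℝ)
    (Z : Ω → ℝ) (Nn : Ω → Fin n → ℝ)
    (hZmeas : Measurable Z) (hNmeas : Measurable Nn)
    (hZpos : ∀ ω, 0 < Z ω)
    (hNn : Measure.map Nn P = Measure.pi fun _ : Fin n => gaussianReal 0 1)
    (hindep : IndepFun Z Nn P)
    (X : Ω → Fin n → ℝ)
    (hX : ∀ ω, X ω = μ + Z ω • γ + Real.sqrt (Z ω) • A.mulVec (Nn ω))
    (a W₀ rf : ℝ)
    (x : Fin n → ℝ)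
    (W : Ω → ℝ)
    (hW : ∀ ω, W ω = W₀ * (1 + rf) + W₀ * (x ⬝ᵥ (X ω - fun _ => rf))) :
    ∫ ω, -Real.exp (-a * W ω) ∂P
      = -Real.exp (-a * W₀ * (1 + rf)) * Real.exp (-a * W₀ * (x ⬝ᵥ (μ - fun _ => rf)))
        * ∫ ω, Real.exp (-(a * W₀ * (x ⬝ᵥ γ) - a ^ 2 * W₀ ^ 2 / 2 * (x ⬝ᵥ (A * Aᵀ).mulVec x)) * Z ω) ∂P := by
  set v := x ᵥ* A
  have hutility : ∀ ω, exp (-a * W ω) = exp (-a * W₀ * (1 + rf))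
      * exp (-a * W₀ * (x ⬝ᵥ (μ - fun _ => rf)))
      * exp (-(a * W₀) * (x ⬝ᵥ γ) * Z ω + (-(a * W₀) * √(Z ω)) • v ⬝ᵥ Nn ω) := by
    intro ω
    rw [← exp_add, ← exp_add]
    simp only [hW, hX, v, ← dotProduct_mulVec, smul_dotProduct, dotProduct_sub, dotProduct_add,
      dotProduct_smul, smul_eq_mul]
    congr 1
    ring
  have hexponent : ∀ z : ℝ, 0 ≤ z →
      -(a * W₀) * (x ⬝ᵥ γ) * z + (-(a * W₀) * √z) • v ⬝ᵥ (-(a * W₀) * √z) • v / 2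
        = -(a * W₀ * (x ⬝ᵥ γ) - a ^ 2 * W₀ ^ 2 / 2 * (x ⬝ᵥ (A * Aᵀ).mulVec x)) * z := by
    intro z hz
    rw [← mulVec_mulVec, mulVec_transpose, dotProduct_mulVec, smul_dotProduct, dotProduct_smul,
      smul_eq_mul, smul_eq_mul]
    linear_combination ((a * W₀) ^ 2 * (v ⬝ᵥ v) / 2) * Real.mul_self_sqrt hz
  simp_rw [hutility, integral_neg, integral_const_mul]
  rw [integral_exp_add_dotProduct_of_indepFun hZmeas hNmeas hNn hindep
    (f := fun z ↦ -(a * W₀) * (x ⬝ᵥ γ) * z) (c := fun z ↦ (-(a * W₀) * √z) • v)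
    (by fun_prop) (by fun_prop)]
  simp_rw [hexponent _ (hZpos _).le, neg_mul]

/-- For the NMVM model `X = μ + γ Z + √Z A N_n` with `Σ = A Aᵀ` and
exponential utility `U(w) = -exp (-a w)`, the expected utility of the wealth
`W(x) = W₀(1 + r_f) + W₀ xᵀ(X - 1 r_f)` equals
`-exp (-a W₀ (1+r_f)) exp (-a W₀ xᵀ(μ - 1 r_f)) L_Z(a W₀ xᵀγ - (a² W₀²/2) xᵀ Σ x)`,
where `L_Z(s) = E[exp (-s Z)]`, provided this last expectation is finite. -/
theorem statement1
    {Ω : Type*} [MeasureSpace Ω] (P : Measure Ω) [IsProbabilityMeasure P]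
    (n : ℕ) (μ γ : Fin n → ℝ) (A : Matrix (Fin n) (Fin n) ℝ) (hA : IsUnit A.det)
    (Z : Ω → ℝ) (Nn : Ω → Fin n → ℝ)
    (hZmeas : Measurable Z) (hNmeas : Measurable Nn)
    (hZpos : ∀ ω, 0 < Z ω)
    (hNn : Measure.map Nn P = Measure.pi fun _ : Fin n => gaussianReal 0 1)
    (hindep : IndepFun Z Nn P)
    (X : Ω → Fin n → ℝ)
    (hX : ∀ ω, X ω = μ + Z ω • γ + Real.sqrt (Z ω) • A.mulVec (Nn ω))
    (a W₀ rf : ℝ) (ha : 0 < a) (hW₀ : 0 < W₀)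
    (x : Fin n → ℝ)
    (W : Ω → ℝ)
    (hW : ∀ ω, W ω = W₀ * (1 + rf) + W₀ * (x ⬝ᵥ (X ω - fun _ => rf)))
    (hint : Integrable (fun ω =>
      Real.exp (-(a * W₀ * (x ⬝ᵥ γ) - a ^ 2 * W₀ ^ 2 / 2 * (x ⬝ᵥ (A * Aᵀ).mulVec x)) * Z ω)) P) :
    ∫ ω, -Real.exp (-a * W ω) ∂P
      = -Real.exp (-a * W₀ * (1 + rf)) * Real.exp (-a * W₀ * (x ⬝ᵥ (μ - fun _ => rf)))
        * ∫ ω, Real.exp (-(a * W₀ * (x ⬝ᵥ γ) - a ^ 2 * W₀ ^ 2 / 2 * (x ⬝ᵥ (A * Aᵀ).mulVec x)) * Z ω) ∂P :=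
  statement1_general P n μ γ A Z Nn hZmeas hNmeas hZpos hNn hindep X hX a W₀ rf x W hW
end

section
/- With notation A = γᵀΣ⁻¹γ, C = (μ-1r_f)ᵀΣ⁻¹(μ-1r_f), the maximal value of g(x) = aW₀xᵀγ - (a²W₀²/2)xᵀΣx over {x : xᵀ(μ - 1r_f) = c} equals A/2 - (q_c²/2)C, where q_c = (B - aW₀c)/C and B = γᵀΣ⁻¹(μ-1r_f). -/
open Matrix

/-!
Substituting `y = a W₀ x`, one has `2 g x = 2 yᵀγ - yᵀΣy` and the constraint becomes
`yᵀm = a W₀ c`. On that hyperplane the objective agrees, up to the constant `2 q (a W₀ c)`, with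
`2 yᵀb - yᵀΣy` for `b = γ - q m` and any `q`; completing the square bounds the latter by
`bᵀΣ⁻¹b`, attained at `y = Σ⁻¹b`. The Lagrange multiplier `q = q_c` is exactly the choice that
puts `Σ⁻¹b` on the hyperplane, so the unconstrained bound is the constrained maximum.
-/

namespace Matrix

variable {ι R : Type*} [Fintype ι]

theorem IsSymm.dotProduct_mulVec_comm [CommSemiring R] {S : Matrix ι ι R} (hS : S.IsSymm)
    (x y : ι → R) : x ⬝ᵥ S *ᵥ y = y ⬝ᵥ S *ᵥ x := by
  rw [dotProduct_mulVec, ← mulVec_transpose, hS.eq, dotProduct_comm]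

variable [DecidableEq ι]

theorem IsSymm.two_mul_dotProduct_sub_dotProduct_mulVec_eq [CommRing R] {S : Matrix ι ι R}
    (hS : S.IsSymm) (hdet : IsUnit S.det) (b y : ι → R) :
    2 * (y ⬝ᵥ b) - y ⬝ᵥ S *ᵥ y =
      b ⬝ᵥ S⁻¹ *ᵥ b - (y - S⁻¹ *ᵥ b) ⬝ᵥ S *ᵥ (y - S⁻¹ *ᵥ b) := by
  have hb : S *ᵥ (S⁻¹ *ᵥ b) = b := by rw [mulVec_mulVec, mul_nonsing_inv S hdet, one_mulVec]
  rw [mulVec_sub, hb, dotProduct_sub, sub_dotProduct, sub_dotProduct,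
    hS.dotProduct_mulVec_comm (S⁻¹ *ᵥ b), hb, dotProduct_comm (S⁻¹ *ᵥ b) b]
  ring

theorem PosDef.isGreatest_quadratic_on_hyperplane {S : Matrix ι ι ℝ} (hS : S.PosDef)
    {m : ι → ℝ} (hm : m ≠ 0) (γ : ι → ℝ) (d : ℝ) :
    IsGreatest {v | ∃ y, y ⬝ᵥ m = d ∧ 2 * (y ⬝ᵥ γ) - y ⬝ᵥ S *ᵥ y = v}
      (γ ⬝ᵥ S⁻¹ *ᵥ γ - ((γ ⬝ᵥ S⁻¹ *ᵥ m - d) / (m ⬝ᵥ S⁻¹ *ᵥ m)) ^ 2 * (m ⬝ᵥ S⁻¹ *ᵥ m)) := by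
  have hSymm : S.IsSymm := isHermitian_iff_isSymm.mp hS.isHermitian
  have hdet : IsUnit S.det := hS.det_pos.ne'.isUnit
  have hC : m ⬝ᵥ S⁻¹ *ᵥ m ≠ 0 := (hS.inv.dotProduct_mulVec_pos hm).ne'
  generalize hq : (γ ⬝ᵥ S⁻¹ *ᵥ m - d) / (m ⬝ᵥ S⁻¹ *ᵥ m) = q
  have hqC : q * (m ⬝ᵥ S⁻¹ *ᵥ m) = γ ⬝ᵥ S⁻¹ *ᵥ m - d := by rw [← hq, div_mul_cancel₀ _ hC]
  set b := γ - q • m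
  have hobj : ∀ y, y ⬝ᵥ m = d →
      2 * (y ⬝ᵥ γ) - y ⬝ᵥ S *ᵥ y = 2 * (y ⬝ᵥ b) - y ⬝ᵥ S *ᵥ y + 2 * q * d := by
    intro y hy
    simp only [b, dotProduct_sub, dotProduct_smul, smul_eq_mul, hy]
    ring
  have hmax : b ⬝ᵥ S⁻¹ *ᵥ b + 2 * q * d = γ ⬝ᵥ S⁻¹ *ᵥ γ - q ^ 2 * (m ⬝ᵥ S⁻¹ *ᵥ m) := by
    simp only [b, mulVec_sub, mulVec_smul, dotProduct_sub, sub_dotProduct, dotProduct_smul,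
      smul_dotProduct, smul_eq_mul, hSymm.inv.dotProduct_mulVec_comm m γ]
    linear_combination 2 * q * hqC
  have hfeasible : (S⁻¹ *ᵥ b) ⬝ᵥ m = d := by
    rw [dotProduct_comm, hSymm.inv.dotProduct_mulVec_comm]
    simp only [b, sub_dotProduct, smul_dotProduct, smul_eq_mul]
    linear_combination -hqC
  refine ⟨⟨S⁻¹ *ᵥ b, hfeasible, ?_⟩, ?_⟩
  · rw [hobj _ hfeasible, hSymm.two_mul_dotProduct_sub_dotProduct_mulVec_eq hdet, sub_self,
      zero_dotProduct, sub_zero, hmax]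
  · rintro v ⟨y, hy, rfl⟩
    rw [hobj y hy, hSymm.two_mul_dotProduct_sub_dotProduct_mulVec_eq hdet, ← hmax]
    have hsq := hS.posSemidef.dotProduct_mulVec_nonneg (y - S⁻¹ *ᵥ b)
    rw [star_trivial] at hsq
    linarith

end Matrix

theorem statement3_general
    (n : ℕ) (a W₀ : ℝ) (ha : 0 < a) (hW₀ : 0 < W₀)
    (γ : Fin n → ℝ) (S : Matrix (Fin n) (Fin n) ℝ)
    (hS : S.PosDef)
    (m : Fin n → ℝ) (hmne : m ≠ 0)
    (g : (Fin n → ℝ) → ℝ)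
    (hg : ∀ x, g x = a * W₀ * (x ⬝ᵥ γ) - a ^ 2 * W₀ ^ 2 / 2 * (x ⬝ᵥ S.mulVec x))
    (c A B C qc : ℝ)
    (hA : A = γ ⬝ᵥ S⁻¹.mulVec γ)
    (hB : B = γ ⬝ᵥ S⁻¹.mulVec m)
    (hC : C = m ⬝ᵥ S⁻¹.mulVec m)
    (hqc : qc = (B - a * W₀ * c) / C) :
    IsGreatest {v : ℝ | ∃ x : Fin n → ℝ, x ⬝ᵥ m = c ∧ g x = v} (A / 2 - qc ^ 2 / 2 * C) := by
  set t := a * W₀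
  have ht : t ≠ 0 := (mul_pos ha hW₀).ne'
  have hg_scaled : ∀ x, g x = (2 * (t • x ⬝ᵥ γ) - t • x ⬝ᵥ S *ᵥ (t • x)) / 2 := by
    intro x
    simp only [hg, t, smul_dotProduct, mulVec_smul, dotProduct_smul, smul_eq_mul]
    ring
  obtain ⟨⟨y, hy, hy_max⟩, hle⟩ := hS.isGreatest_quadratic_on_hyperplane hmne γ (t * c)
  rw [← hA, ← hB, ← hC, ← hqc] at hy_max hle
  refine ⟨⟨t⁻¹ • y, ?_, ?_⟩, ?_⟩
  · rw [smul_dotProduct, hy, smul_eq_mul, inv_mul_cancel_left₀ ht]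
  · rw [hg_scaled, smul_smul, mul_inv_cancel₀ ht, one_smul, hy_max]
    ring
  · rintro v ⟨x, hx, rfl⟩
    have hx_le := hle ⟨t • x, by rw [smul_dotProduct, hx, smul_eq_mul], rfl⟩
    rw [hg_scaled]
    linarith

/-- With `A = γᵀΣ⁻¹γ`, `B = γᵀΣ⁻¹(μ - 1 r_f)`,
`C = (μ - 1 r_f)ᵀΣ⁻¹(μ - 1 r_f)` and `q_c = (B - a W₀ c)/C`, the maximal value of
`g(x) = a W₀ xᵀγ - (a² W₀²/2) xᵀ Σ x` over `{x : xᵀ(μ - 1 r_f) = c}` equals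
`A/2 - (q_c²/2) C`. -/
theorem statement3
    (n : ℕ) (a W₀ : ℝ) (ha : 0 < a) (hW₀ : 0 < W₀)
    (γ μ : Fin n → ℝ) (rf : ℝ) (S : Matrix (Fin n) (Fin n) ℝ)
    (hS : S.PosDef)
    (m : Fin n → ℝ) (hm : m = μ - fun _ => rf) (hmne : m ≠ 0)
    (g : (Fin n → ℝ) → ℝ)
    (hg : ∀ x, g x = a * W₀ * (x ⬝ᵥ γ) - a ^ 2 * W₀ ^ 2 / 2 * (x ⬝ᵥ S.mulVec x))
    (c A B C qc : ℝ)
    (hA : A = γ ⬝ᵥ S⁻¹.mulVec γ)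
    (hB : B = γ ⬝ᵥ S⁻¹.mulVec m)
    (hC : C = m ⬝ᵥ S⁻¹.mulVec m)
    (hqc : qc = (B - a * W₀ * c) / C) :
    IsGreatest {v : ℝ | ∃ x : Fin n → ℝ, x ⬝ᵥ m = c ∧ g x = v} (A / 2 - qc ^ 2 / 2 * C) :=
  statement3_general n a W₀ ha hW₀ γ S hS m hmne g hg c A B C qc hA hB hC hqc
end

section
/- Under the same setup, if s₀ is finite then H(θ) → +∞ as θ → θ₀⁻ and as θ → -θ₀⁺, where θ₀ = √((A-2s₀)/C). Consequently any minimizer of H on (-θ₀, θ₀) lies in (-θ₀, 0]. -/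
open MeasureTheory Real Filter

open scoped ENNReal Topology

/-!
By Fatou's lemma the `ℝ≥0∞`-valued Laplace transform `s ↦ ∫⁻ exp (-s Z)` is lower
semicontinuous, so it tends to `∞` at `s₀`, where it is infinite. The argument
`A/2 - θ²C/2` of `L` in `H` equals `s₀` exactly at `θ = ±θ₀`, and the factor `exp (C θ)`
stays away from `0`, so `H → ∞` there. Inside `(-θ₀, θ₀)` the value of `L` is finite and
nonzero and depends on `θ` only through `θ²`, so `H (-θ) < H θ` for `θ > 0`: a minimizer
cannot be positive.
-/

noncomputable def lintegralLaplace {Ω : Type*} [MeasurableSpace Ω] (P : Measure Ω)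
    (Z : Ω → ℝ) (s : ℝ) : ℝ≥0∞ :=
  ∫⁻ ω, ENNReal.ofReal (exp (-s * Z ω)) ∂P

section Laplace

variable {Ω : Type*} [MeasurableSpace Ω] (P : Measure Ω) {Z : Ω → ℝ}

lemma lowerSemicontinuous_lintegralLaplace (hZ : Measurable Z) :
    LowerSemicontinuous (lintegralLaplace P Z) := by
  refine lowerSemicontinuous_iff_le_liminf.2 fun s => ?_
  have hcont : ∀ ω, Continuous fun t : ℝ => ENNReal.ofReal (exp (-t * Z ω)) := by
    intro ω; exact ENNReal.continuous_ofReal.comp (by fun_prop)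
  calc lintegralLaplace P Z s
      = ∫⁻ ω, liminf (fun t => ENNReal.ofReal (exp (-t * Z ω))) (𝓝 s) ∂P := by
        simp only [lintegralLaplace, ((hcont _).tendsto s).liminf_eq]
    _ ≤ liminf (lintegralLaplace P Z) (𝓝 s) :=
        lintegral_liminf_le fun t => ((hZ.const_mul _).exp).ennreal_ofReal

lemma tendsto_lintegralLaplace_top (hZ : Measurable Z) {s₀ : ℝ}
    (h : lintegralLaplace P Z s₀ = ∞) : Tendsto (lintegralLaplace P Z) (𝓝 s₀) (𝓝 ∞) :=
  tendsto_order.2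
    ⟨fun y hy => lowerSemicontinuous_lintegralLaplace P hZ s₀ y (hy.trans_eq h.symm),
      fun _ hy => absurd hy not_top_lt⟩

lemma lintegralLaplace_ne_zero [NeZero P] (hZ : Measurable Z) (s : ℝ) :
    lintegralLaplace P Z s ≠ 0 := by
  intro h
  rw [lintegralLaplace, lintegral_eq_zero_iff ((hZ.const_mul (-s)).exp).ennreal_ofReal] at h
  obtain ⟨ω, hω⟩ := h.exists
  simp only [Pi.zero_apply, ENNReal.ofReal_eq_zero] at hω
  exact hω.not_gt (exp_pos _)

end Laplace

lemma ENNReal.tendsto_mul_top {α : Type*} {l : Filter α} {f g : α → ℝ≥0∞} {a : ℝ≥0∞}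
    (hf : Tendsto f l (𝓝 a)) (ha : a ≠ 0) (hg : Tendsto g l (𝓝 ∞)) :
    Tendsto (fun x => f x * g x) l (𝓝 ∞) := by
  simpa [ENNReal.mul_top ha] using ENNReal.Tendsto.mul hf (.inl ha) hg (.inl top_ne_zero)

lemma ofReal_exp_neg_mul_lt {C θ : ℝ} (hC : 0 < C) (hθ : 0 < θ) {a : ℝ≥0∞} (ha₀ : a ≠ 0)
    (ha : a ≠ ∞) : ENNReal.ofReal (exp (C * -θ)) * a < ENNReal.ofReal (exp (C * θ)) * a := by
  rw [ENNReal.mul_lt_mul_iff_left ha₀ ha, ENNReal.ofReal_lt_ofReal_iff (exp_pos _), exp_lt_exp]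
  nlinarith

theorem statement5_general
    {Ω : Type*} [MeasureSpace Ω] (P : Measure Ω) [IsProbabilityMeasure P]
    (Z : Ω → ℝ) (hZmeas : Measurable Z)
    (s₀ : ℝ) (hs₀ : s₀ < 0)
    (L : ℝ → ENNReal)
    (hL : ∀ s : ℝ, L s = ∫⁻ ω, ENNReal.ofReal (Real.exp (-s * Z ω)) ∂P)
    (hfin : ∀ s : ℝ, s₀ < s → L s < ⊤)
    (hinf : L s₀ = ⊤)
    (A C : ℝ) (hA : 0 ≤ A) (hC : 0 < C)
    (θ₀ : ℝ) (hθ₀ : θ₀ = Real.sqrt ((A - 2 * s₀) / C))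
    (H : ℝ → ENNReal)
    (hH : ∀ θ, H θ = ENNReal.ofReal (Real.exp (C * θ)) * L (A / 2 - θ ^ 2 / 2 * C)) :
    Tendsto H (nhdsWithin θ₀ (Set.Iio θ₀)) (nhds ⊤) ∧
    Tendsto H (nhdsWithin (-θ₀) (Set.Ioi (-θ₀))) (nhds ⊤) ∧
    ∀ θ ∈ Set.Ioo (-θ₀) θ₀, IsMinOn H (Set.Ioo (-θ₀) θ₀) θ → θ ∈ Set.Ioc (-θ₀) 0 := by
  have hLeq : L = lintegralLaplace P Z := funext hL
  have hθ₀sq : θ₀ ^ 2 = (A - 2 * s₀) / C := by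
    rw [hθ₀, sq_sqrt (div_nonneg (by linarith) hC.le)]
  have hq : ∀ θ, A / 2 - θ ^ 2 / 2 * C = s₀ + (θ₀ ^ 2 - θ ^ 2) * C / 2 := by
    intro θ; rw [hθ₀sq]; field_simp; ring
  have htop : ∀ x, x ^ 2 = θ₀ ^ 2 → Tendsto H (𝓝 x) (𝓝 ⊤) := by
    intro x hx
    have hqx : A / 2 - x ^ 2 / 2 * C = s₀ := by rw [hq, hx, sub_self]; ring
    have hq_tendsto := (by fun_prop : Continuous fun θ : ℝ => A / 2 - θ ^ 2 / 2 * C).tendsto x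
    rw [hqx] at hq_tendsto
    have hLq := (tendsto_lintegralLaplace_top P hZmeas (hLeq ▸ hinf)).comp hq_tendsto
    rw [funext hH, hLeq]
    exact ENNReal.tendsto_mul_top ((ENNReal.continuous_ofReal.comp (by fun_prop)).tendsto x)
      (ENNReal.ofReal_pos.2 (exp_pos _)).ne' hLq
  refine ⟨(htop θ₀ rfl).mono_left nhdsWithin_le_nhds,
    (htop (-θ₀) (neg_sq θ₀)).mono_left nhdsWithin_le_nhds, fun θ hθ hmin => ⟨hθ.1, ?_⟩⟩
  by_contra! hpos
  have hθsq : θ ^ 2 < θ₀ ^ 2 := by nlinarith [hθ.1, hθ.2]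
  have hfinθ : L (A / 2 - θ ^ 2 / 2 * C) ≠ ⊤ :=
    (hfin _ (by rw [hq]; linarith [mul_pos (sub_pos.2 hθsq) hC])).ne
  have hle := hmin (⟨by linarith [hθ.2], by linarith [hθ.1]⟩ : -θ ∈ Set.Ioo (-θ₀) θ₀)
  rw [Set.mem_ofPred_eq, hH, hH, neg_sq] at hle
  exact hle.not_gt (ofReal_exp_neg_mul_lt hC hpos
    (hLeq ▸ lintegralLaplace_ne_zero P hZmeas _) hfinθ)

/-- With `H(θ) = exp (C θ) L_Z(A/2 - (θ²/2) C)` (here formulated with the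
`ℝ≥0∞`-valued Laplace transform so that `L_Z(s₀) = +∞` makes sense), if `s₀` is finite
then `H(θ) → +∞` as `θ → θ₀⁻` and as `θ → (-θ₀)⁺`, where `θ₀ = √((A - 2 s₀)/C)`;
consequently any minimizer of `H` on `(-θ₀, θ₀)` lies in `(-θ₀, 0]`. -/
theorem statement5
    {Ω : Type*} [MeasureSpace Ω] (P : Measure Ω) [IsProbabilityMeasure P]
    (Z : Ω → ℝ) (hZmeas : Measurable Z) (hZpos : ∀ ω, 0 < Z ω)
    (s₀ : ℝ) (hs₀ : s₀ < 0)
    (L : ℝ → ENNReal)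
    (hL : ∀ s : ℝ, L s = ∫⁻ ω, ENNReal.ofReal (Real.exp (-s * Z ω)) ∂P)
    (hfin : ∀ s : ℝ, s₀ < s → L s < ⊤)
    (hinf : L s₀ = ⊤)
    (A C : ℝ) (hA : 0 ≤ A) (hC : 0 < C)
    (θ₀ : ℝ) (hθ₀ : θ₀ = Real.sqrt ((A - 2 * s₀) / C))
    (H : ℝ → ENNReal)
    (hH : ∀ θ, H θ = ENNReal.ofReal (Real.exp (C * θ)) * L (A / 2 - θ ^ 2 / 2 * C)) :
    Tendsto H (nhdsWithin θ₀ (Set.Iio θ₀)) (nhds ⊤) ∧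
    Tendsto H (nhdsWithin (-θ₀) (Set.Ioi (-θ₀))) (nhds ⊤) ∧
    ∀ θ ∈ Set.Ioo (-θ₀) θ₀, IsMinOn H (Set.Ioo (-θ₀) θ₀) θ → θ ∈ Set.Ioc (-θ₀) 0 :=
  statement5_general P Z hZmeas s₀ hs₀ L hL hfin hinf A C hA hC θ₀ hθ₀ H hH
end
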